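/- arXiv:1007.2318 — 11 statements merged into one kernel-verified Lean document; each statement's English description precedes it below -/
import Mathlib

section
/- Let (r₁,r₂) ∈ ℚ² ∖ ℤ² and (s₁,s₂) ∈ ℤ². Then for every τ in the complex upper half-plane ℍ, g_{(r₁+s₁, r₂+s₂)}(τ) = (−1)^{s₁s₂+s₁+s₂} · e^{−πi(s₁r₂ − s₂r₁)} · g_{(r₁,r₂)}(τ). -/
/-! In the variables `q = q_τ` and `w = q_z`, the product part of `g` is
`(1 - w) ∏_{n ≥ 1} (1 - qⁿ w)(1 - qⁿ w⁻¹)`. An integral shift of `r₂` leaves `w` unchanged, while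
`r₁ ↦ r₁ + 1` sends `w` to `q w`, under which the product picks up the factor `-w⁻¹` (the
quasi-periodicity of the Jacobi theta function); against the change of the prefactor
`q_τ^{B₂(r₁)/2} e^{πi r₂(r₁-1)}` this leaves exactly the multiplier `-e^{-πi r₂}`.
Iterating the shift of `r₁` over `ℤ` and composing with the shift of `r₂` gives the theorem. -/

/-- The Siegel function `g_{(r₁,r₂)}(τ)`, defined by the product expansion
`g_{(r₁,r₂)}(τ) = -q_τ^{B₂(r₁)/2} e^{πi r₂(r₁-1)} (1-q_z) ∏_{n≥1} (1-q_τ^n q_z)(1-q_τ^n q_z⁻¹)`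
where `B₂(X) = X² - X + 1/6`, `q_τ = e^{2πiτ}` and `q_z = e^{2πiz}` with `z = r₁τ + r₂`. -/
noncomputable def siegelG (r : ℚ × ℚ) (τ : ℂ) : ℂ :=
  -Complex.exp (2 * Real.pi * Complex.I * τ * (((r.1 : ℂ) ^ 2 - (r.1 : ℂ) + 1 / 6) / 2)) *
    Complex.exp (Real.pi * Complex.I * (r.2 : ℂ) * ((r.1 : ℂ) - 1)) *
    (1 - Complex.exp (2 * Real.pi * Complex.I * ((r.1 : ℂ) * τ + (r.2 : ℂ)))) *
    ∏' n : ℕ,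
      ((1 - Complex.exp (2 * Real.pi * Complex.I * (((n : ℂ) + 1) * τ + ((r.1 : ℂ) * τ + (r.2 : ℂ))))) *
        (1 - Complex.exp (2 * Real.pi * Complex.I * (((n : ℂ) + 1) * τ - ((r.1 : ℂ) * τ + (r.2 : ℂ))))))

open Complex
open scoped UpperHalfPlane Real

theorem apply_add_intCast_eq_zpow_mul {α G₀ : Type*} [AddGroupWithOne α] [CommGroupWithZero G₀]
    {f : α → G₀} {c : G₀} (hc : c ≠ 0) (hf : ∀ x, f (x + 1) = c * f x) (n : ℤ) (x : α) :
    f (x + n) = c ^ n * f x := by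
  induction n using Int.induction_on with
  | zero => simp
  | succ n ih =>
    rw [Int.cast_add, Int.cast_one, ← add_assoc, hf, ih, zpow_add_one₀ hc, mul_comm _ c, mul_assoc]
  | pred n ih =>
    have h := hf (x + (-n - 1 : ℤ))
    rw [add_assoc, Int.cast_sub, Int.cast_one, sub_add_cancel, ih] at h
    rw [Int.cast_sub, Int.cast_one, zpow_sub_one₀ hc, mul_comm _ c⁻¹, mul_assoc, h,
      inv_mul_cancel_left₀ hc]

theorem multipliable_one_sub_pow_mul {q : ℂ} (hq : ‖q‖ < 1) (c : ℂ) :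
    Multipliable fun n : ℕ ↦ 1 - q ^ n * c := by
  simpa [sub_eq_add_neg] using Complex.multipliable_one_add_of_summable
    ((summable_geometric_of_norm_lt_one hq).mul_right c).neg

/-- The product part of `siegelG`, with `q = q_τ` and `w = q_z`. -/
noncomputable def siegelProduct (q w : ℂ) : ℂ :=
  (1 - w) * ∏' n : ℕ, (1 - q ^ (n + 1) * w) * (1 - q ^ (n + 1) * w⁻¹)

theorem siegelProduct_mul_left {q w : ℂ} (hq : ‖q‖ < 1) (hq₀ : q ≠ 0) (hw : w ≠ 0) :
    siegelProduct q (q * w) = -w⁻¹ * siegelProduct q w := by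
  have hM (c : ℂ) (k : ℕ) : Multipliable fun n : ℕ ↦ 1 - q ^ (n + k) * c := by
    simpa [pow_add, mul_assoc] using multipliable_one_sub_pow_mul hq (q ^ k * c)
  have hterm (n : ℕ) : (1 - q ^ (n + 1) * (q * w)) * (1 - q ^ (n + 1) * (q * w)⁻¹) =
      (1 - q ^ (n + 2) * w) * (1 - q ^ n * w⁻¹) := by
    field_simp
    ring
  have hw_head :
      ∏' n : ℕ, (1 - q ^ (n + 1) * w) = (1 - q * w) * ∏' n : ℕ, (1 - q ^ (n + 2) * w) := by
    rw [tprod_eq_zero_mul' (f := fun n ↦ 1 - q ^ (n + 1) * w) (hM w 2)]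
    simp only [zero_add, pow_one, add_assoc, one_add_one_eq_two]
  have hw_inv_head :
      ∏' n : ℕ, (1 - q ^ n * w⁻¹) = (1 - w⁻¹) * ∏' n : ℕ, (1 - q ^ (n + 1) * w⁻¹) := by
    rw [tprod_eq_zero_mul' (f := fun n ↦ 1 - q ^ n * w⁻¹) (hM w⁻¹ 1)]
    simp only [pow_zero, one_mul]
  unfold siegelProduct
  rw [tprod_congr hterm, (hM w 2).tprod_mul (multipliable_one_sub_pow_mul hq w⁻¹),
    (hM w 1).tprod_mul (hM w⁻¹ 1), hw_head, hw_inv_head]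
  field_simp
  ring

theorem siegelG_eq_siegelProduct (r : ℚ × ℚ) (τ : ℂ) :
    siegelG r τ = -cexp (2 * π * I * τ * ((r.1 ^ 2 - r.1 + 1 / 6) / 2)) *
      cexp (π * I * r.2 * (r.1 - 1)) *
      siegelProduct (cexp (2 * π * I * τ)) (cexp (2 * π * I * (r.1 * τ + r.2))) := by
  have h (n : ℕ) (z : ℂ) : cexp (2 * π * I * ((n + 1) * τ + z)) =
      cexp (2 * π * I * τ) ^ (n + 1) * cexp (2 * π * I * z) := by
    rw [← exp_nat_mul, ← exp_add]
    congr 1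
    push_cast
    ring
  rw [siegelG, siegelProduct, mul_assoc]
  congr 2
  refine tprod_congr fun n ↦ ?_
  rw [h, sub_eq_add_neg _ (_ * τ + _), h, mul_neg, exp_neg]

theorem siegelG_snd_add_int (r₁ r₂ : ℚ) (s : ℤ) (τ : ℂ) :
    siegelG (r₁, r₂ + s) τ = (-1) ^ s * cexp (π * I * s * r₁) * siegelG (r₁, r₂) τ := by
  have hw : cexp (2 * π * I * (r₁ * τ + (r₂ + s))) = cexp (2 * π * I * (r₁ * τ + r₂)) := by
    rw [show 2 * π * I * (r₁ * τ + (r₂ + s)) = 2 * π * I * (r₁ * τ + r₂) + s * (2 * π * I) by ring,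
      exp_add, exp_int_mul_two_pi_mul_I, mul_one]
  have hphase : cexp (π * I * (r₂ + s) * (r₁ - 1)) =
      (-1) ^ s * cexp (π * I * s * r₁) * cexp (π * I * r₂ * (r₁ - 1)) := by
    rw [← exp_neg_pi_mul_I, ← exp_int_mul, ← exp_add, ← exp_add]
    congr 1
    ring
  rw [siegelG_eq_siegelProduct, siegelG_eq_siegelProduct]
  push_cast
  rw [hw, hphase]
  ring

theorem siegelG_fst_add_one (r₁ r₂ : ℚ) (τ : ℍ) :
    siegelG (r₁ + 1, r₂) τ = -cexp (-(π * I * r₂)) * siegelG (r₁, r₂) τ := by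
  have hw : cexp (2 * π * I * ((r₁ + 1) * τ + r₂)) =
      cexp (2 * π * I * τ) * cexp (2 * π * I * (r₁ * τ + r₂)) := by
    rw [← exp_add]
    congr 1
    ring
  rw [siegelG_eq_siegelProduct, siegelG_eq_siegelProduct]
  push_cast
  rw [hw, siegelProduct_mul_left τ.norm_exp_two_pi_I_lt_one (exp_ne_zero _) (exp_ne_zero _)]
  simp only [neg_mul, mul_neg, neg_neg, ← exp_neg, ← mul_assoc, ← exp_add]
  congr 2
  ring

theorem siegelG_fst_add_int (r₁ r₂ : ℚ) (s : ℤ) (τ : ℍ) :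
    siegelG (r₁ + s, r₂) τ = (-1) ^ s * cexp (-(π * I * s * r₂)) * siegelG (r₁, r₂) τ := by
  refine (apply_add_intCast_eq_zpow_mul (f := fun x ↦ siegelG (x, r₂) τ)
    (neg_ne_zero.2 (exp_ne_zero _)) (siegelG_fst_add_one · r₂ τ) s r₁).trans ?_
  rw [neg_eq_neg_one_mul, mul_zpow, ← exp_int_mul]
  ring_nf

theorem siegelG_add_int_general (r₁ r₂ : ℚ)
    (s₁ s₂ : ℤ) (τ : UpperHalfPlane) :
    siegelG (r₁ + s₁, r₂ + s₂) (τ : ℂ) =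
      (-1 : ℂ) ^ (s₁ * s₂ + s₁ + s₂) *
        Complex.exp (-(Real.pi * Complex.I * ((s₁ : ℂ) * (r₂ : ℂ) - (s₂ : ℂ) * (r₁ : ℂ)))) *
        siegelG (r₁, r₂) (τ : ℂ) := by
  rw [siegelG_snd_add_int, siegelG_fst_add_int]
  simp only [← exp_pi_mul_I, ← exp_int_mul, ← mul_assoc, ← exp_add]
  congr 2
  push_cast
  ring

/-- For `(r₁,r₂) ∈ ℚ² \ ℤ²`, `(s₁,s₂) ∈ ℤ²` and `τ ∈ ℍ`,
`g_{(r₁+s₁, r₂+s₂)}(τ) = (-1)^{s₁s₂+s₁+s₂} e^{-πi(s₁r₂ - s₂r₁)} g_{(r₁,r₂)}(τ)`. -/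
theorem siegelG_add_int (r₁ r₂ : ℚ)
    (hr : ¬((∃ a : ℤ, (a : ℚ) = r₁) ∧ (∃ b : ℤ, (b : ℚ) = r₂)))
    (s₁ s₂ : ℤ) (τ : UpperHalfPlane) :
    siegelG (r₁ + s₁, r₂ + s₂) (τ : ℂ) =
      (-1 : ℂ) ^ (s₁ * s₂ + s₁ + s₂) *
        Complex.exp (-(Real.pi * Complex.I * ((s₁ : ℂ) * (r₂ : ℂ) - (s₂ : ℂ) * (r₁ : ℂ)))) *
        siegelG (r₁, r₂) (τ : ℂ) :=
  siegelG_add_int_general r₁ r₂ s₁ s₂ τ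
end

section
/- Let d ≤ −7 be a real number, and set A = e^{−π√(−d)} and D = √(−d/3). Then for every integer N ≥ 2, |1 − ζ_N| / (1 − A^{1/(DN)}) > 1, where ζ_N = e^{2πi/N}. -/
/-!
The numerator is `2 sin x` with `x = π / N ∈ (0, π / 2]`, and since `√(-d) / √(-d / 3) = √3`
the denominator is `1 - e^{-√3 x}`, independently of `d`. For `x ≥ π / 6` the numerator is at
least `1`, while the denominator is below `1`. For `x ≤ π / 6` we have
`1 - e^{-√3 x} < √3 x ≤ 2 (x - x³ / 6) < 2 sin x`.
-/

open Real

theorem norm_one_sub_exp_two_pi_I_div (N : ℕ) :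
    ‖1 - Complex.exp (2 * π * Complex.I / N)‖ = 2 * sin (π / N) := by
  have hsin : 0 ≤ sin (π / N) := by
    obtain rfl | hN := N.eq_zero_or_pos
    · simp
    · exact sin_nonneg_of_nonneg_of_le_pi (by positivity)
        (div_le_self pi_pos.le (by exact_mod_cast hN))
  have harg : 2 * π * Complex.I / N = Complex.I * ((2 * π / N : ℝ) : ℂ) := by
    push_cast; ring
  rw [norm_sub_rev, harg, Complex.norm_exp_I_mul_ofReal_sub_one, Real.norm_eq_abs,
    mul_div_assoc, mul_div_cancel_left₀ _ two_ne_zero, abs_of_nonneg (by positivity)]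

theorem exp_neg_pi_sqrt_rpow {d : ℝ} (hd : d < 0) (N : ℕ) :
    exp (-π * √(-d)) ^ (1 / (√(-d / 3) * N)) = exp (-(√3 * (π / N))) := by
  have hsqrt : √(-d) = √3 * √(-d / 3) := by
    rw [← sqrt_mul zero_le_three]; ring_nf
  have hpos : 0 < √(-d / 3) := sqrt_pos.mpr (by linarith)
  rw [← exp_mul, hsqrt]
  congr 1
  calc -π * (√3 * √(-d / 3)) * (1 / (√(-d / 3) * N))
      = -(√3 * π) * (√(-d / 3) / (√(-d / 3) * N)) := by ring
    _ = -(√3 * (π / N)) := by rw [div_mul_cancel_left₀ hpos.ne']; ring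

theorem sqrt_three_mul_le_two_sin {x : ℝ} (hx0 : 0 < x) (hx : x ≤ π / 6) :
    √3 * x ≤ 2 * sin x := by
  have hsin := sin_gt_sub_cube hx0
  have hx1 : x ≤ 0.53 := hx.trans (by linarith [pi_lt_d2])
  have hsqrt3 : √3 ≤ 1.75 := by
    rw [sqrt_le_left (by norm_num)]; norm_num
  nlinarith [mul_pos hx0 hx0]

theorem one_sub_exp_neg_sqrt_three_mul_lt_two_sin {x : ℝ} (hx0 : 0 < x) (hx : x ≤ π / 2) :
    1 - exp (-(√3 * x)) < 2 * sin x := by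
  rcases le_total x (π / 6) with hsmall | hlarge
  · have hy : -(√3 * x) ≠ 0 := neg_ne_zero.mpr (by positivity)
    linarith [add_one_lt_exp hy, sqrt_three_mul_le_two_sin hx0 hsmall]
  · have : sin (π / 6) ≤ sin x :=
      sin_le_sin_of_le_of_le_pi_div_two (by linarith [pi_pos]) hx hlarge
    linarith [sin_pi_div_six, exp_pos (-(√3 * x))]

/-- For `d ≤ -7`, `A = e^{-π√(-d)}`, `D = √(-d/3)` and any integer `N ≥ 2`,
`|1 - ζ_N| / (1 - A^{1/(DN)}) > 1` where `ζ_N = e^{2πi/N}`. -/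
theorem abs_one_sub_zeta_div_gt_one (d : ℝ) (hd : d ≤ -7) (N : ℕ) (hN : 2 ≤ N) :
    ‖1 - Complex.exp (2 * Real.pi * Complex.I / (N : ℂ))‖ /
        (1 - Real.exp (-Real.pi * Real.sqrt (-d)) ^ (1 / (Real.sqrt (-d / 3) * (N : ℝ)))) > 1 := by
  have hx0 : 0 < π / N := div_pos pi_pos (by positivity)
  have hx : π / N ≤ π / 2 :=
    div_le_div_of_nonneg_left pi_pos.le two_pos (by exact_mod_cast hN)
  have hden : 0 < 1 - exp (-(√3 * (π / N))) := by
    rw [sub_pos, exp_lt_one_iff, neg_lt_zero]; positivity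
  rw [norm_one_sub_exp_two_pi_I_div, exp_neg_pi_sqrt_rpow (by linarith), gt_iff_lt,
    one_lt_div hden]
  exact one_sub_exp_neg_sqrt_three_mul_lt_two_sin hx0 hx
end

section
/- Let d ≤ −7 be a real number, and set A = e^{−π√(−d)} and D = √(−d/3). Then for every real number X ≥ 1/2, 1/(1 − A^{X/D}) < 1 + A^{X/(1.03·D)}. -/
lemma exp_264_gt : (12.5:ℝ) < Real.exp 2.64 := by
  have h1 : ((1:ℝ) + 2.64/32) ≤ Real.exp (2.64/32) := by
    have := Real.add_one_le_exp (2.64/32:ℝ); linarith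
  have h2 : ((1:ℝ) + 2.64/32)^(32:ℕ) ≤ (Real.exp (2.64/32))^(32:ℕ) :=
    pow_le_pow_left₀ (by norm_num) h1 32
  have h3 : (Real.exp (2.64/32))^(32:ℕ) = Real.exp 2.64 := by
    rw [← Real.exp_nat_mul]; norm_num
  have h4 : (12.5:ℝ) < ((1:ℝ) + 2.64/32)^(32:ℕ) := by norm_num
  calc (12.5:ℝ) < ((1:ℝ) + 2.64/32)^(32:ℕ) := h4
    _ ≤ _ := h2.trans_eq h3

lemma exp_neg_264_lt : Real.exp (-2.64) < 0.08 := by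
  rw [Real.exp_neg]
  rw [inv_lt_comm₀ (Real.exp_pos _) (by norm_num)]
  calc (0.08:ℝ)⁻¹ = 12.5 := by norm_num
    _ < Real.exp 2.64 := exp_264_gt

lemma exp_0792_gt : (1.0396:ℝ)^(2:ℕ) ≤ Real.exp 0.0792 := by
  have h1 : ((1:ℝ) + 0.0396) ≤ Real.exp 0.0396 := by
    have := Real.add_one_le_exp (0.0396:ℝ); linarith
  have h2 : ((1:ℝ) + 0.0396)^(2:ℕ) ≤ (Real.exp 0.0396)^(2:ℕ) :=
    pow_le_pow_left₀ (by norm_num) h1 2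
  have h3 : (Real.exp 0.0396)^(2:ℕ) = Real.exp 0.0792 := by
    rw [← Real.exp_nat_mul]; norm_num
  calc (1.0396:ℝ)^(2:ℕ) = ((1:ℝ) + 0.0396)^(2:ℕ) := by norm_num
    _ ≤ _ := h2.trans_eq h3

/-- core inequality: for t ≥ 2.72, 1/(1-exp(-t)) < 1 + exp(-(t/1.03)). -/
lemma core (t : ℝ) (ht : 2.72 ≤ t) :
    1 / (1 - Real.exp (-t)) < 1 + Real.exp (-(t/1.03)) := by
  set x := Real.exp (-t) with hxdef
  set y := Real.exp (-(t/1.03)) with hydef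
  have hy0 : 0 < y := Real.exp_pos _
  have hx0 : 0 < x := Real.exp_pos _
  have hx1 : x < 1 := by
    rw [hxdef, Real.exp_lt_one_iff]; linarith
  have hxyz : x = y * Real.exp (-(3*t/103)) := by
    rw [hxdef, hydef, ← Real.exp_add]
    congr 1
    field_simp
    ring
  set z := Real.exp (-(3*t/103)) with hzdef
  have hz0 : 0 < z := Real.exp_pos _
  -- bounds
  have hyb : y < 0.08 := by
    have : Real.exp (-(t/1.03)) ≤ Real.exp (-2.64) := by
      apply Real.exp_le_exp.2
      rw [neg_le_neg_iff]
      rw [le_div_iff₀ (by norm_num : (0:ℝ) < 1.03)]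
      linarith
    exact lt_of_le_of_lt this exp_neg_264_lt
  have hzb : z ≤ Real.exp (-0.0792) := by
    apply Real.exp_le_exp.2
    have : (0.0792:ℝ) ≤ 3*t/103 := by linarith
    linarith
  have hzb2 : Real.exp (-0.0792) ≤ 1 / (1.0396:ℝ)^(2:ℕ) := by
    rw [Real.exp_neg]
    rw [inv_le_comm₀ (Real.exp_pos _) (by norm_num)] at *
    · rw [one_div, inv_inv]; exact exp_0792_gt
  have hkey : z * (1 + y) < 1 := by
    have h1 : z * (1 + y) ≤ (1 / (1.0396:ℝ)^(2:ℕ)) * (1 + 0.08) := by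
      apply mul_le_mul (hzb.trans hzb2) (by linarith) (by linarith) (by positivity)
    have h2 : (1 / (1.0396:ℝ)^(2:ℕ)) * (1 + 0.08) < 1 := by norm_num
    linarith
  have h1x : 0 < 1 - x := by linarith
  rw [div_lt_iff₀ h1x]
  have hpos : 0 < y * (1 - z * (1 + y)) := mul_pos hy0 (by linarith)
  nlinarith [hxyz, hpos]

/-- For `d ≤ -7`, `A = e^{-π√(-d)}`, `D = √(-d/3)` and any real `X ≥ 1/2`,
`1/(1 - A^{X/D}) < 1 + A^{X/(1.03·D)}`. -/
theorem one_div_one_sub_rpow_lt (d : ℝ) (hd : d ≤ -7) (X : ℝ) (hX : 1 / 2 ≤ X) :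
    1 / (1 - Real.exp (-Real.pi * Real.sqrt (-d)) ^ (X / Real.sqrt (-d / 3))) <
      1 + Real.exp (-Real.pi * Real.sqrt (-d)) ^ (X / (1.03 * Real.sqrt (-d / 3))) := by
  have hd0 : (0:ℝ) < -d := by linarith
  have hs : 0 < Real.sqrt (-d) := Real.sqrt_pos.2 hd0
  have h3 : (0:ℝ) < Real.sqrt 3 := Real.sqrt_pos.2 (by norm_num)
  have hdiv : Real.sqrt (-d / 3) = Real.sqrt (-d) / Real.sqrt 3 :=
    Real.sqrt_div hd0.le 3
  set s := Real.sqrt (-d) with hsdef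
  set r := Real.sqrt 3 with hrdef
  have hs0 : s ≠ 0 := ne_of_gt hs
  have hr0 : r ≠ 0 := ne_of_gt h3
  set t := Real.pi * r * X with htdef
  have e1 : Real.exp (-Real.pi * s) ^ (X / Real.sqrt (-d / 3)) = Real.exp (-t) := by
    rw [hdiv, ← Real.exp_mul]
    congr 1
    field_simp
    ring
  have e2 : Real.exp (-Real.pi * s) ^ (X / (1.03 * Real.sqrt (-d / 3))) = Real.exp (-(t/1.03)) := by
    rw [hdiv, ← Real.exp_mul]
    congr 1
    field_simp
    ring
  rw [e1, e2]
  apply core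
  -- t = π * √3 * X ≥ 3.1415 * 1.732 * 0.5 ≥ 2.72
  have hpi : (3.1415:ℝ) < Real.pi := Real.pi_gt_d4
  have hr17 : (1.732:ℝ) ≤ r := by
    rw [hrdef]
    nlinarith [Real.sq_sqrt (show (0:ℝ) ≤ 3 by norm_num), Real.sqrt_nonneg 3]
  have hX0 : (0:ℝ) < X := by linarith
  have h1 : (3.1415:ℝ) * 1.732 ≤ Real.pi * r := by
    apply mul_le_mul (le_of_lt hpi) hr17 (by norm_num) (by positivity)
  have h2 : (3.1415:ℝ) * 1.732 * (1/2) ≤ Real.pi * r * X := by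
    apply mul_le_mul h1 hX (by norm_num) (by positivity)
  rw [htdef]
  nlinarith
end

section
/- Let F be a finite Galois extension of a field L with Galois group G = {γ₁, ..., γ_n} (so n = [F:L]). Elements x₁, ..., x_n of F form a basis of F as an L-vector space if and only if the determinant of the n×n matrix with (k,ℓ)-entry γ_ℓ⁻¹(x_k) is nonzero. -/
/-!
The trace matrix `(Tr(x_k x_ℓ))` of `x` equals `M Mᵀ` for `M = (γ_ℓ⁻¹ x_k)`, because the trace of a
Galois extension is the sum over its automorphisms. Hence `det M ^ 2` is the discriminant of `x`,
which is nonzero exactly when the `n = [F : L]` elements `x_k` form a basis, the trace form of a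
separable extension being nondegenerate.
-/

open Matrix Module

namespace Algebra

variable {K L : Type*} [Field K] [Field L] [Algebra K L] [FiniteDimensional K L]

theorem linearIndependent_and_span_eq_top_iff_discr_ne_zero [Algebra.IsSeparable K L]
    {ι : Type*} [Fintype ι] [DecidableEq ι] {x : ι → L}
    (hcard : Fintype.card ι = finrank K L) :
    (LinearIndependent K x ∧ Submodule.span K (Set.range x) = ⊤) ↔ discr K x ≠ 0 := by
  refine ⟨fun ⟨hli, hsp⟩ => ?_, fun hdiscr => ?_⟩
  · simpa using discr_not_zero_of_basis K (Basis.mk hli hsp.ge)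
  · have hli : LinearIndependent K x := by
      by_contra h
      exact hdiscr (discr_zero_of_not_linearIndependent K h)
    exact ⟨hli, hli.span_eq_top_of_card_eq_finrank' hcard⟩

variable [IsGalois K L]

theorem traceMatrix_map_eq_mul_transpose_of_bijective {ι κ : Type*} [Fintype ι]
    {γ : ι → Gal(L/K)} (hγ : Function.Bijective γ) (x : κ → L) :
    (traceMatrix K x).map (algebraMap K L) =
      of (fun k ℓ => (γ ℓ)⁻¹ (x k)) * (of fun k ℓ => (γ ℓ)⁻¹ (x k))ᵀ := by
  ext k k'
  have hsum : ∑ ℓ, (γ ℓ)⁻¹ (x k * x k') = ∑ σ : Gal(L/K), σ (x k * x k') :=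
    Fintype.sum_equiv ((Equiv.ofBijective γ hγ).trans (Equiv.inv _)) _ _ fun _ => rfl
  rw [map_apply, traceMatrix_apply, traceForm_apply, trace_eq_sum_automorphisms, ← hsum, mul_apply]
  simp only [of_apply, transpose_apply, map_mul]

theorem algebraMap_discr_eq_det_sq_of_bijective {ι : Type*} [Fintype ι] [DecidableEq ι]
    {γ : ι → Gal(L/K)} (hγ : Function.Bijective γ) (x : ι → L) :
    algebraMap K L (discr K x) = (of fun k ℓ => (γ ℓ)⁻¹ (x k)).det ^ 2 := by
  rw [discr_def, RingHom.map_det, RingHom.mapMatrix_apply,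
    traceMatrix_map_eq_mul_transpose_of_bijective hγ, det_mul, det_transpose, sq]

end Algebra

/-- Let `F/L` be a finite Galois extension with Galois group `G = {γ₁, ..., γₙ}`.
Elements `x₁, ..., xₙ` of `F` form an `L`-basis of `F` if and only if
`det(γ_ℓ⁻¹(x_k))_{k,ℓ} ≠ 0`. -/
theorem basis_iff_det_ne_zero (L F : Type*) [Field L] [Field F] [Algebra L F]
    [IsGalois L F] [FiniteDimensional L F] (n : ℕ)
    (γ : Fin n → (F ≃ₐ[L] F)) (hγ : Function.Bijective γ) (x : Fin n → F) :
    (LinearIndependent L x ∧ Submodule.span L (Set.range x) = ⊤) ↔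
      Matrix.det (Matrix.of fun k ℓ : Fin n => (γ ℓ)⁻¹ (x k)) ≠ 0 := by
  have hcard : Fintype.card (Fin n) = finrank L F := by
    rw [← IsGalois.card_aut_eq_finrank, ← Nat.card_eq_fintype_card, Nat.card_eq_of_bijective γ hγ]
  rw [Algebra.linearIndependent_and_span_eq_top_iff_discr_ne_zero hcard,
    ← (algebraMap L F).injective.ne_iff, map_zero,
    Algebra.algebraMap_discr_eq_det_sq_of_bijective hγ, pow_ne_zero_iff two_ne_zero]
end

section
/- Let G = {γ₁, ..., γ_n} be a finite abelian group and let Ĝ denote its group of characters with values in ℂ (i.e. group homomorphisms G → ℂˣ). Then for every function f : G → ℂ, ∏_{χ ∈ Ĝ} ( Σ_{k=1}^n χ(γ_k⁻¹) f(γ_k) ) = det( f(γ_k γ_ℓ⁻¹) )_{1 ≤ k,ℓ ≤ n} (the Frobenius determinant relation). -/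
open Matrix Finset

private lemma char_sum_eq_zero {G : Type*} [CommGroup G] [Fintype G]
    {θ : G →* ℂˣ} (hθ : θ ≠ 1) : ∑ g : G, ((θ g : ℂˣ) : ℂ) = 0 := by
  obtain ⟨a, ha⟩ : ∃ a, θ a ≠ 1 := by
    by_contra h
    push_neg at h
    exact hθ (MonoidHom.ext fun g => h g)
  have key : ((θ a : ℂˣ) : ℂ) * ∑ g : G, ((θ g : ℂˣ) : ℂ) = ∑ g : G, ((θ g : ℂˣ) : ℂ) := by
    rw [Finset.mul_sum]
    refine Fintype.sum_bijective (fun g => a * g) (Group.mulLeft_bijective a) _ _ fun g => ?_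
    push_cast [_root_.map_mul]
    ring
  have ha' : ((θ a : ℂˣ) : ℂ) ≠ 1 := fun h => ha (Units.ext h)
  have := sub_eq_zero_of_eq key
  rw [← sub_one_mul] at this
  rcases mul_eq_zero.mp this with h | h
  · exact absurd (by linear_combination h) ha'
  · exact h

/-- The Frobenius determinant relation: for a finite abelian group `G = {γ₁, ..., γₙ}` and any
function `f : G → ℂ`,
`∏_{χ ∈ Ĝ} (∑_{k=1}^n χ(γ_k⁻¹) f(γ_k)) = det(f(γ_k γ_ℓ⁻¹))_{k,ℓ}`,
where `Ĝ` is the group of characters `G → ℂˣ` (a finite group, so the finitary product `∏ᶠ`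
over all characters is the product over `Ĝ`). -/
theorem frobenius_determinant (G : Type*) [CommGroup G] [Fintype G] (n : ℕ)
    (γ : Fin n → G) (hγ : Function.Bijective γ) (f : G → ℂ) :
    (∏ᶠ χ : G →* ℂˣ, ∑ k : Fin n, ((χ ((γ k)⁻¹) : ℂˣ) : ℂ) * f (γ k)) =
      Matrix.det (Matrix.of fun k ℓ : Fin n => f (γ k * (γ ℓ)⁻¹)) := by
  classical
  have hGcard : Fintype.card G = n := by
    rw [← Fintype.card_fin n]
    exact (Fintype.card_of_bijective hγ).symm
  have hn : n ≠ 0 := by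
    rw [← hGcard]
    exact Fintype.card_ne_zero
  haveI : NeZero (Monoid.exponent G) :=
    ⟨(Monoid.ExponentExists.of_finite (G := G)).exponent_ne_zero⟩
  obtain ⟨e⟩ := CommGroup.monoidHom_mulEquiv_of_hasEnoughRootsOfUnity G ℂ
  haveI : Fintype (G →* ℂˣ) := Fintype.ofEquiv G e.symm.toEquiv
  have hcard : Fintype.card (Fin n) = Fintype.card (G →* ℂˣ) := by
    rw [Fintype.card_congr e.toEquiv, hGcard, Fintype.card_fin]
  let χ' : Fin n → (G →* ℂˣ) := Fintype.equivOfCardEq hcard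
  have hχ' : Function.Bijective χ' := (Fintype.equivOfCardEq hcard).bijective
  set lam : (G →* ℂˣ) → ℂ := fun χ => ∑ k : Fin n, ((χ ((γ k)⁻¹) : ℂˣ) : ℂ) * f (γ k) with hlam
  set P : Matrix (Fin n) (Fin n) ℂ := Matrix.of fun k i => ((χ' i (γ k) : ℂˣ) : ℂ) with hP
  set Q : Matrix (Fin n) (Fin n) ℂ := Matrix.of fun i k => ((χ' i ((γ k)⁻¹) : ℂˣ) : ℂ) with hQ
  set M : Matrix (Fin n) (Fin n) ℂ := Matrix.of fun k ℓ => f (γ k * (γ ℓ)⁻¹) with hM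
  -- orthogonality: Q * P = n • 1
  have hQP : Q * P = (n : ℂ) • 1 := by
    ext i j
    rw [Matrix.mul_apply]
    have hsum : ∑ k : Fin n, Q i k * P k j
        = ∑ g : G, ((χ' i (g⁻¹) : ℂˣ) : ℂ) * ((χ' j g : ℂˣ) : ℂ) :=
      Fintype.sum_bijective γ hγ _ _ fun k => rfl
    rw [hsum]
    by_cases hij : i = j
    · subst hij
      have : ∀ g : G, ((χ' i (g⁻¹) : ℂˣ) : ℂ) * ((χ' i g : ℂˣ) : ℂ) = 1 := by
        intro g
        norm_num
      simp only [this, Finset.sum_const, Finset.card_univ, Fintype.card_fin, nsmul_eq_mul,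
        mul_one, Matrix.smul_apply, Matrix.one_apply_eq, smul_eq_mul, hGcard]
    · have hθ : χ' j * (χ' i)⁻¹ ≠ 1 := by
        intro h
        apply hij
        exact (hχ'.injective (mul_inv_eq_one.mp h)).symm
      have := char_sum_eq_zero hθ
      have hterm : ∀ g : G, ((χ' i (g⁻¹) : ℂˣ) : ℂ) * ((χ' j g : ℂˣ) : ℂ)
          = (((χ' j * (χ' i)⁻¹) g : ℂˣ) : ℂ) := by
        intro g
        rw [MonoidHom.mul_apply, MonoidHom.inv_apply, map_inv]
        push_cast
        ring
      rw [Finset.sum_congr rfl fun g _ => hterm g, this, Matrix.smul_apply,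
        Matrix.one_apply_ne hij, smul_zero]
  -- eigenvector relation: M * P = P * diagonal (lam ∘ χ')
  have hMP : M * P = P * Matrix.diagonal (fun i => lam (χ' i)) := by
    ext k i
    rw [Matrix.mul_apply, Matrix.mul_diagonal]
    have hsum : ∑ ℓ : Fin n, M k ℓ * P ℓ i
        = ∑ g : G, f (γ k * g⁻¹) * ((χ' i g : ℂˣ) : ℂ) :=
      Fintype.sum_bijective γ hγ _ _ fun ℓ => rfl
    have hlam' : lam (χ' i) = ∑ g : G, ((χ' i (g⁻¹) : ℂˣ) : ℂ) * f g :=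
      (Fintype.sum_bijective γ hγ _ _ fun k => rfl)
    have hbij : Function.Bijective (fun h : G => γ k * h⁻¹) := by
      refine Function.Involutive.bijective fun h => ?_
      simp [_root_.mul_inv_rev, mul_comm, mul_assoc]
    have hsum2 : ∑ g : G, f (γ k * g⁻¹) * ((χ' i g : ℂˣ) : ℂ)
        = ∑ h : G, f h * (((χ' i (γ k)) : ℂˣ) : ℂ) * ((χ' i (h⁻¹) : ℂˣ) : ℂ) := by
      refine (Fintype.sum_bijective _ hbij _ _ fun h => ?_).symm
      have h1 : γ k * (γ k * h⁻¹)⁻¹ = h := by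
        simp [_root_.mul_inv_rev, mul_comm, mul_assoc]
      rw [h1, _root_.map_mul, map_inv]
      push_cast
      ring
    rw [hsum, hsum2, hlam', Finset.mul_sum]
    refine Finset.sum_congr rfl fun h _ => ?_
    dsimp [P]
    ring
  have hdetP : P.det ≠ 0 := by
    intro h0
    have : (Q * P).det = 0 := by rw [Matrix.det_mul, h0, mul_zero]
    rw [hQP, Matrix.smul_one_eq_diagonal, Matrix.det_diagonal, Finset.prod_const,
      Finset.card_univ, Fintype.card_fin] at this
    exact pow_ne_zero n (Nat.cast_ne_zero.mpr hn) this
  have hdet : M.det * P.det = P.det * ∏ i : Fin n, lam (χ' i) := by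
    rw [← Matrix.det_mul, hMP, Matrix.det_mul, Matrix.det_diagonal]
  have hfin : (∏ᶠ χ : G →* ℂˣ, lam χ) = ∏ i : Fin n, lam (χ' i) := by
    rw [finprod_eq_prod_of_fintype]
    exact (Fintype.prod_bijective χ' hχ' _ _ fun i => rfl).symm
  rw [show (∏ᶠ χ : G →* ℂˣ, ∑ k : Fin n, ((χ ((γ k)⁻¹) : ℂˣ) : ℂ) * f (γ k))
      = ∏ᶠ χ : G →* ℂˣ, lam χ from rfl, hfin]
  rw [mul_comm] at hdet
  exact (mul_left_cancel₀ hdetP hdet).symm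
end

section
/- Let L ⊆ F be subfields of ℂ with F/L a finite abelian Galois extension. Suppose x ∈ F is nonzero and satisfies |γ(x)/x| < 1 for every γ ∈ Gal(F/L) with γ ≠ id. Then there exists a positive integer m such that the conjugates {γ(x^m) : γ ∈ Gal(F/L)} form a normal basis of F over L. -/
/-!
Write `f γ = γ(x)/x`, so `f 1 = 1` and `‖f γ‖ < 1` for `γ ≠ 1`. The determinant of the matrix
`(στ(x^m))_{σ,τ}` is `x^{mn}` (with `n = [F : L]`) times the determinant of `(f(στ)^m)_{σ,τ}`,
and as `m → ∞` the latter matrix tends to the permutation matrix of `σ ↦ σ⁻¹`, whose determinant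
is `±1`. So for large `m` the matrix of conjugates of `x^m` is invertible, which makes the
conjugates linearly independent; there are `n` of them, so they form a basis.
-/

open Filter Topology

def conjugateMatrix (K : Type*) {E : Type*} [Field K] [Field E] [Algebra K E] (y : E) :
    Matrix (E ≃ₐ[K] E) (E ≃ₐ[K] E) E :=
  Matrix.of fun σ τ => (σ * τ) y

theorem linearIndependent_conjugates_of_det_ne_zero {K E : Type*} [Field K] [Field E]
    [Algebra K E] [Fintype (E ≃ₐ[K] E)] [DecidableEq (E ≃ₐ[K] E)] {y : E}
    (hdet : (conjugateMatrix K y).det ≠ 0) :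
    LinearIndependent K (fun σ : E ≃ₐ[K] E => σ y) := by
  rw [Fintype.linearIndependent_iff]
  intro c hc
  have hmul : (conjugateMatrix K y).mulVec (fun τ => algebraMap K E (c τ)) = 0 := by
    funext ρ
    have := congrArg ρ hc
    simpa [map_sum, Algebra.smul_def, Matrix.mulVec, dotProduct, conjugateMatrix,
      AlgEquiv.mul_apply, mul_comm] using this
  intro τ
  exact (algebraMap K E).injective
    (by simpa using congrFun (Matrix.eq_zero_of_mulVec_eq_zero hdet hmul) τ)

theorem isBasis_conjugates_of_det_ne_zero {K E : Type*} [Field K] [Field E] [Algebra K E]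
    [FiniteDimensional K E] [IsGalois K E] [DecidableEq (E ≃ₐ[K] E)] {y : E}
    (hdet : (conjugateMatrix K y).det ≠ 0) :
    LinearIndependent K (fun σ : E ≃ₐ[K] E => σ y) ∧
      Submodule.span K (Set.range fun σ : E ≃ₐ[K] E => σ y) = ⊤ := by
  have hli := linearIndependent_conjugates_of_det_ne_zero hdet
  refine ⟨hli, hli.span_eq_top_of_card_eq_finrank ?_⟩
  rw [← Nat.card_eq_fintype_card, IsGalois.card_aut_eq_finrank]

theorem eventually_det_pow_ne_zero {G 𝕜 : Type*} [Group G] [Fintype G] [DecidableEq G]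
    [NormedField 𝕜] {f : G → 𝕜} (hf1 : f 1 = 1) (hf : ∀ g, g ≠ 1 → ‖f g‖ < 1) :
    ∀ᶠ m : ℕ in atTop, (Matrix.of fun σ τ => f (σ * τ) ^ m).det ≠ 0 := by
  have hlim : Tendsto (fun m : ℕ => Matrix.of fun σ τ : G => f (σ * τ) ^ m) atTop
      (𝓝 ((Equiv.inv G).permMatrix 𝕜)) := by
    refine tendsto_pi_nhds.2 fun σ => tendsto_pi_nhds.2 fun τ => ?_
    simp only [Matrix.of_apply, PEquiv.toMatrix_apply, Equiv.toPEquiv_apply, Option.mem_def,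
      Option.some.injEq, Equiv.inv_apply, inv_eq_iff_mul_eq_one]
    split_ifs with h
    · simp [h, hf1]
    · exact tendsto_pow_atTop_nhds_zero_of_norm_lt_one (hf _ h)
  have hdet := (continuous_id.matrix_det.tendsto _).comp hlim
  rw [Function.comp_def, id, Matrix.det_permutation] at hdet
  exact hdet.eventually_ne ((Equiv.Perm.sign _).isUnit.map (Int.castRingHom 𝕜)).ne_zero

theorem high_power_normal_basis_general (L : Subfield ℂ) (F : IntermediateField L ℂ)
    [FiniteDimensional L F] [IsGalois L F]
    (x : F) (hx : x ≠ 0)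
    (hlt : ∀ γ : F ≃ₐ[L] F, γ ≠ 1 → ‖(γ x : ℂ) / (x : ℂ)‖ < 1) :
    ∃ m : ℕ, 0 < m ∧
      (LinearIndependent L (fun σ : F ≃ₐ[L] F => σ (x ^ m)) ∧
        Submodule.span L (Set.range fun σ : F ≃ₐ[L] F => σ (x ^ m)) = ⊤) := by
  classical
  have hxC : (x : ℂ) ≠ 0 := by exact_mod_cast hx
  set f : (F ≃ₐ[L] F) → ℂ := fun γ => (γ x : ℂ) / x
  have hdet_eq : ∀ m : ℕ, algebraMap F ℂ (conjugateMatrix L (x ^ m)).det =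
      ((x : ℂ) ^ m) ^ Fintype.card (F ≃ₐ[L] F) * (Matrix.of fun σ τ => f (σ * τ) ^ m).det := by
    intro m
    rw [RingHom.map_det, ← Matrix.det_smul]
    congr 1
    ext σ τ
    simp only [conjugateMatrix, f, RingHom.mapMatrix_apply, Matrix.map_apply, Matrix.smul_apply,
      Matrix.of_apply, map_pow, smul_eq_mul, div_pow]
    exact (mul_div_cancel₀ _ (pow_ne_zero m hxC)).symm
  obtain ⟨m, hdet, hm⟩ := ((eventually_det_pow_ne_zero (f := f) (div_self hxC) hlt).and
    (eventually_gt_atTop 0)).exists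
  refine ⟨m, hm, isBasis_conjugates_of_det_ne_zero fun h => ?_⟩
  have := hdet_eq m
  rw [h, map_zero] at this
  exact mul_ne_zero (pow_ne_zero _ (pow_ne_zero _ hxC)) hdet this.symm

/-- Let `L ⊆ F` be subfields of `ℂ` with `F/L` a finite abelian Galois extension. If `x ∈ F` is
nonzero and `|γ(x)/x| < 1` for every `γ ≠ id` in `Gal(F/L)`, then the conjugates of some power
`x^m` (with `m ≥ 1`) form a normal basis of `F` over `L`. -/
theorem high_power_normal_basis (L : Subfield ℂ) (F : IntermediateField L ℂ)
    [FiniteDimensional L F] [IsGalois L F]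
    (hab : ∀ σ τ : F ≃ₐ[L] F, σ * τ = τ * σ)
    (x : F) (hx : x ≠ 0)
    (hlt : ∀ γ : F ≃ₐ[L] F, γ ≠ 1 → ‖(γ x : ℂ) / (x : ℂ)‖ < 1) :
    ∃ m : ℕ, 0 < m ∧
      (LinearIndependent L (fun σ : F ≃ₐ[L] F => σ (x ^ m)) ∧
        Submodule.span L (Set.range fun σ : F ≃ₐ[L] F => σ (x ^ m)) = ⊤) :=
  high_power_normal_basis_general L F x hx hlt
end

section
/- Let N ≥ 1 be an integer. Then for every τ in the complex upper half-plane ℍ, ∏_{w=1}^{N−1} g_{(0, w/N)}^{12}(τ) = N^{12} · Δ(Nτ)/Δ(τ), where the left-hand side is the empty product (equal to 1) when N = 1, and Δ(τ) = (2πi)^{12} · q_τ · ∏_{n=1}^∞ (1 − q_τ^n)^{24} with q_τ = e^{2πiτ}. -/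
/-- The discriminant function `Δ(τ) = (2πi)^{12} q_τ ∏_{n≥1} (1 - q_τ^n)^{24}`. -/
noncomputable def Delta (τ : ℂ) : ℂ :=
  (2 * Real.pi * Complex.I) ^ 12 * Complex.exp (2 * Real.pi * Complex.I * τ) *
    ∏' n : ℕ, (1 - Complex.exp (2 * Real.pi * Complex.I * ((n : ℂ) + 1) * τ)) ^ 24

open Complex Finset
open scoped Real

noncomputable def qPochhammer (a q : ℂ) : ℂ :=
  ∏' n : ℕ, (1 - a * q ^ n)

lemma summable_norm_mul_pow (a : ℂ) {q : ℂ} (hq : ‖q‖ < 1) :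
    Summable fun n : ℕ => ‖a * q ^ n‖ := by
  simpa [norm_mul, norm_pow] using (summable_geometric_of_lt_one (norm_nonneg q) hq).mul_left ‖a‖

lemma multipliable_one_sub_mul_pow (a : ℂ) {q : ℂ} (hq : ‖q‖ < 1) :
    Multipliable fun n : ℕ => 1 - a * q ^ n := by
  simpa [sub_eq_add_neg] using
    multipliable_one_add_of_summable (f := fun n => -(a * q ^ n))
      (by simpa using summable_norm_mul_pow a hq)

lemma qPochhammer_ne_zero {a q : ℂ} (ha : ‖a‖ < 1) (hq : ‖q‖ < 1) : qPochhammer a q ≠ 0 := by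
  have hlt : ∀ n : ℕ, ‖a * q ^ n‖ < 1 := fun n => by
    rw [norm_mul, norm_pow]
    exact mul_lt_one_of_nonneg_of_lt_one_left (norm_nonneg a) ha
      (pow_le_one₀ (norm_nonneg q) hq.le)
  simpa [qPochhammer, sub_eq_add_neg] using
    tprod_one_add_ne_zero_of_summable (f := fun n => -(a * q ^ n))
      (fun n h => (hlt n).ne (by rw [show a * q ^ n = 1 by linear_combination -h, norm_one]))
      (by simpa using summable_norm_mul_pow a hq)

lemma IsPrimitiveRoot.prod_range_one_sub_pow_mul {R : Type*} [CommRing R] [IsDomain R]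
    {ζ : R} {n : ℕ} (hζ : IsPrimitiveRoot ζ n) (hn : 0 < n) (x : R) :
    ∏ i ∈ range n, (1 - ζ ^ i * x) = 1 - x ^ n := by
  simpa [Polynomial.eval_prod] using
    (congrArg (Polynomial.eval 1) (X_pow_sub_C_eq_prod hζ hn (rfl : x ^ n = x ^ n))).symm

lemma IsPrimitiveRoot.prod_range_qPochhammer {ζ : ℂ} {N : ℕ} (hζ : IsPrimitiveRoot ζ N)
    (hN : 0 < N) (a : ℂ) {q : ℂ} (hq : ‖q‖ < 1) :
    ∏ w ∈ range N, qPochhammer (ζ ^ w * a) q = qPochhammer (a ^ N) (q ^ N) := by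
  simp only [qPochhammer]
  rw [← Multipliable.tprod_finsetProd fun w _ => multipliable_one_sub_mul_pow _ hq]
  refine tprod_congr fun n => ?_
  simp only [mul_assoc, hζ.prod_range_one_sub_pow_mul hN, mul_pow, ← pow_mul, mul_comm n N]

lemma IsPrimitiveRoot.prod_Ico_qPochhammer_mul {ζ : ℂ} {N : ℕ} (hζ : IsPrimitiveRoot ζ N)
    (hN : 0 < N) (a : ℂ) {q : ℂ} (hq : ‖q‖ < 1) :
    (∏ w ∈ Ico 1 N, qPochhammer (ζ ^ w * a) q) * qPochhammer a q =
      qPochhammer (a ^ N) (q ^ N) := by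
  rw [← hζ.prod_range_qPochhammer hN a hq, prod_range_eq_mul_Ico _ hN, pow_zero, one_mul,
    mul_comm]

lemma IsPrimitiveRoot.prod_Ico_qPochhammer_mul_qPochhammer_inv {ζ : ℂ} {N : ℕ}
    (hζ : IsPrimitiveRoot ζ N) (hN : 0 < N) (a : ℂ) {q : ℂ} (hq : ‖q‖ < 1) :
    (∏ w ∈ Ico 1 N, qPochhammer (ζ ^ w * a) q * qPochhammer (ζ⁻¹ ^ w * a) q) *
      qPochhammer a q ^ 2 = qPochhammer (a ^ N) (q ^ N) ^ 2 := by
  rw [prod_mul_distrib]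
  linear_combination (∏ w ∈ Ico 1 N, qPochhammer (ζ⁻¹ ^ w * a) q) * qPochhammer a q *
      hζ.prod_Ico_qPochhammer_mul hN a hq +
    qPochhammer (a ^ N) (q ^ N) * hζ.inv.prod_Ico_qPochhammer_mul hN a hq

lemma IsPrimitiveRoot.prod_Ico_one_sub_pow {R : Type*} [CommRing R] [IsDomain R]
    {ζ : R} {N : ℕ} (hζ : IsPrimitiveRoot ζ N) (hN : 0 < N) :
    ∏ w ∈ Ico 1 N, (1 - ζ ^ w) = N := by
  obtain ⟨M, rfl⟩ := Nat.exists_eq_add_of_lt hN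
  rw [zero_add] at hζ ⊢
  rw [prod_Ico_eq_prod_range, Nat.add_sub_cancel]
  simpa [add_comm 1] using hζ.prod_one_sub_pow_eq_order

lemma prod_Ico_pow_sq_eq_one {M : Type*} [CommMonoid M] {ζ : M} {N : ℕ} (h : ζ ^ N = 1) :
    (∏ w ∈ Ico 1 N, ζ ^ w) ^ 2 = 1 := by
  rw [prod_pow_eq_pow_sum, ← pow_mul]
  rcases N.eq_zero_or_pos with rfl | hN
  · simp
  have hsum : ∑ w ∈ Ico 1 N, w = ∑ w ∈ range N, w := by simp [sum_range_eq_add_Ico _ hN]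
  rw [hsum, sum_range_id_mul_two, pow_mul, h, one_pow]

lemma cexp_add_succ_mul (w v : ℂ) (n : ℕ) :
    cexp (w + (n + 1) * v) = cexp w * cexp v * cexp v ^ n := by
  rw [← exp_nat_mul, ← exp_add, ← exp_add]
  ring_nf

lemma Delta_eq_qPochhammer {τ : ℂ} (hq : ‖cexp (2 * π * I * τ)‖ < 1) :
    Delta τ = (2 * π * I) ^ 12 * cexp (2 * π * I * τ) *
      qPochhammer (cexp (2 * π * I * τ)) (cexp (2 * π * I * τ)) ^ 24 := by
  rw [Delta, qPochhammer, ← (multipliable_one_sub_mul_pow _ hq).tprod_pow]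
  refine congrArg (_ * ·) (tprod_congr fun n => ?_)
  rw [← pow_succ', ← exp_nat_mul]
  push_cast
  ring_nf

lemma siegelG_zero_fst (r : ℚ) {τ : ℂ} (hq : ‖cexp (2 * π * I * τ)‖ < 1) :
    siegelG (0, r) τ =
      -cexp (2 * π * I * τ / 12) * cexp (-(π * I * r)) * (1 - cexp (2 * π * I * r)) *
        (qPochhammer (cexp (2 * π * I * r) * cexp (2 * π * I * τ)) (cexp (2 * π * I * τ)) *
          qPochhammer ((cexp (2 * π * I * r))⁻¹ * cexp (2 * π * I * τ))
            (cexp (2 * π * I * τ))) := by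
  rw [siegelG, qPochhammer, qPochhammer,
    ← (multipliable_one_sub_mul_pow _ hq).tprod_mul (multipliable_one_sub_mul_pow _ hq)]
  simp only [Rat.cast_zero, zero_mul, zero_add]
  congr 3
  · ring_nf
  · ring_nf
  · funext n
    rw [← exp_neg, ← cexp_add_succ_mul, ← cexp_add_succ_mul]
    ring_nf

lemma siegelG_zero_fst_pow_twelve (r : ℚ) {τ : ℂ} (hq : ‖cexp (2 * π * I * τ)‖ < 1) :
    siegelG (0, r) τ ^ 12 =
      cexp (2 * π * I * τ) * (cexp (2 * π * I * r))⁻¹ ^ 6 * (1 - cexp (2 * π * I * r)) ^ 12 *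
        (qPochhammer (cexp (2 * π * I * r) * cexp (2 * π * I * τ)) (cexp (2 * π * I * τ)) *
          qPochhammer ((cexp (2 * π * I * r))⁻¹ * cexp (2 * π * I * τ))
            (cexp (2 * π * I * τ))) ^ 12 := by
  have hq12 : cexp (2 * π * I * τ / 12) ^ 12 = cexp (2 * π * I * τ) := by
    rw [← exp_nat_mul]
    ring_nf
  have hr12 : cexp (-(π * I * r)) ^ 12 = (cexp (2 * π * I * r))⁻¹ ^ 6 := by
    rw [← exp_neg, ← exp_nat_mul, ← exp_nat_mul]
    ring_nf
  rw [siegelG_zero_fst r hq, mul_pow, mul_pow, mul_pow, Even.neg_pow (by decide), hq12, hr12]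

lemma Delta_ne_zero (τ : UpperHalfPlane) : Delta τ ≠ 0 := by
  have hq := UpperHalfPlane.norm_exp_two_pi_I_lt_one τ
  rw [Delta_eq_qPochhammer hq]
  exact mul_ne_zero (mul_ne_zero (pow_ne_zero _ (by simp [Real.pi_ne_zero])) (exp_ne_zero _))
    (pow_ne_zero _ (qPochhammer_ne_zero hq hq))

lemma Delta_nat_mul_eq_qPochhammer (τ : UpperHalfPlane) {N : ℕ} (hN : N ≠ 0) :
    Delta (N * τ) = (2 * π * I) ^ 12 * cexp (2 * π * I * τ) ^ N *
      qPochhammer (cexp (2 * π * I * τ) ^ N) (cexp (2 * π * I * τ) ^ N) ^ 24 := by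
  have hq := UpperHalfPlane.norm_exp_two_pi_I_lt_one τ
  have hqN : cexp (2 * π * I * (N * τ)) = cexp (2 * π * I * τ) ^ N := by
    rw [← exp_nat_mul]
    ring_nf
  have hqN_lt : ‖cexp (2 * π * I * (N * τ))‖ < 1 := by
    rw [hqN, norm_pow]
    exact pow_lt_one₀ (norm_nonneg _) hq hN
  rw [Delta_eq_qPochhammer hqN_lt, hqN]

lemma cexp_two_pi_I_mul_nat_div (w N : ℕ) :
    cexp (2 * π * I * (((w : ℚ) / N : ℚ) : ℂ)) = cexp (2 * π * I / N) ^ w := by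
  rw [← exp_nat_mul]
  push_cast
  ring_nf

/-- For every integer `N ≥ 1` and every `τ ∈ ℍ`,
`∏_{w=1}^{N-1} g_{(0,w/N)}^{12}(τ) = N^{12} Δ(Nτ)/Δ(τ)`. -/
theorem prod_siegelG_eq_delta_quotient (N : ℕ) (hN : 1 ≤ N) (τ : UpperHalfPlane) :
    ∏ w ∈ Finset.Ico 1 N, siegelG (0, (w : ℚ) / (N : ℚ)) (τ : ℂ) ^ 12 =
      (N : ℂ) ^ 12 * Delta ((N : ℂ) * (τ : ℂ)) / Delta (τ : ℂ) := by
  have hN0 : N ≠ 0 := by omega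
  set q := cexp (2 * π * I * τ)
  set ζ := cexp (2 * π * I / N)
  have hq : ‖q‖ < 1 := UpperHalfPlane.norm_exp_two_pi_I_lt_one τ
  have hζ : IsPrimitiveRoot ζ N := isPrimitiveRoot_exp N hN0
  have hfactor : ∀ w : ℕ, siegelG (0, (w : ℚ) / (N : ℚ)) τ ^ 12 =
      q * (ζ⁻¹ ^ w) ^ 6 * (1 - ζ ^ w) ^ 12 *
        (qPochhammer (ζ ^ w * q) q * qPochhammer (ζ⁻¹ ^ w * q) q) ^ 12 := fun w => by
    rw [siegelG_zero_fst_pow_twelve _ hq, cexp_two_pi_I_mul_nat_div, ← inv_pow]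
  have hDelta : Delta τ = (2 * π * I) ^ 12 * q * qPochhammer q q ^ 24 := Delta_eq_qPochhammer hq
  have hS : (∏ w ∈ Ico 1 N, ζ⁻¹ ^ w) ^ 6 = 1 := by
    rw [show 6 = 2 * 3 from rfl, pow_mul, prod_Ico_pow_sq_eq_one hζ.inv.pow_eq_one, one_pow]
  rw [prod_congr rfl fun w _ => hfactor w, eq_div_iff (Delta_ne_zero τ), hDelta,
    Delta_nat_mul_eq_qPochhammer τ hN0]
  rw [prod_mul_distrib, prod_mul_distrib, prod_mul_distrib, prod_const, prod_pow, prod_pow,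
    prod_pow, Nat.card_Ico, hS, hζ.prod_Ico_one_sub_pow hN]
  rw [show 24 = 2 * 12 from rfl, pow_mul, pow_mul,
    ← hζ.prod_Ico_qPochhammer_mul_qPochhammer_inv hN q hq, ← pow_sub_one_mul hN0 q]
  ring
end

section
/- Let L be a number field containing a primitive n-th root of unity and let F be a cyclic Galois extension of L of degree n. Then there exist ξ ∈ L and α ∈ F with αⁿ = ξ and F = L(α), and moreover the conjugates {γ(Σ_{s=0}^{n−1} α^s) : γ ∈ Gal(F/L)} of the element Σ_{s=0}^{n−1} α^s form a normal basis of F over L. -/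
/-!
By Kummer theory `F = L(α)` with `αⁿ ∈ L`. Every `σ ∈ Gal(F/L)` multiplies `α` by an `n`-th root
of unity `c σ ∈ L`, and `σ ↦ c σ` is injective because `α` generates `F`. Hence
`σ (∑ αˢ) = ∑ (c σ)ˢ αˢ`: in the power basis `(αˢ)` the conjugates of `∑ αˢ` form a Vandermonde
matrix with distinct nodes, which is invertible.
-/

def IsNormalBasisGen (L F : Type*) [Field L] [Field F] [Algebra L F] (x : F) : Prop :=
  LinearIndependent L (fun σ : F ≃ₐ[L] F => σ x) ∧
    Submodule.span L (Set.range fun σ : F ≃ₐ[L] F => σ x) = ⊤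

open Module

theorem Module.Basis.linearIndependent_and_span_eq_top_sum_pow_smul {K V ι : Type*} [Field K]
    [AddCommGroup V] [Module K V] [Fintype ι] {n : ℕ} (b : Basis (Fin n) K V) {c : ι → K}
    (hc : Function.Injective c) (hι : Fintype.card ι = n) :
    LinearIndependent K (fun j => ∑ i : Fin n, c j ^ (i : ℕ) • b i) ∧
      Submodule.span K (Set.range fun j => ∑ i : Fin n, c j ^ (i : ℕ) • b i) = ⊤ := by
  classical
  let e : ι ≃ Fin n := Fintype.equivFinOfCardEq hι
  rw [(b.reindex e.symm).is_basis_iff_det, Basis.det_apply, isUnit_iff_ne_zero]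
  have hmat : (b.reindex e.symm).toMatrix (fun j => ∑ i : Fin n, c j ^ (i : ℕ) • b i) =
      (Matrix.vandermonde (c ∘ e.symm)).transpose.submatrix e e := by
    ext j k
    simp [Basis.toMatrix_apply, Matrix.vandermonde, Finsupp.single_apply, Equiv.symm_apply_eq]
  rw [hmat, Matrix.det_submatrix_equiv_self, Matrix.det_transpose,
    Matrix.det_vandermonde_ne_zero_iff]
  exact hc.comp e.symm.injective

theorem exists_basis_pow_of_adjoin_simple_eq_top {K L : Type*} [Field K] [Field L] [Algebra K L]
    [FiniteDimensional K L] {α : L} (hα : IntermediateField.adjoin K {α} = ⊤) :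
    ∃ b : Basis (Fin (finrank K L)) K L, ∀ i, b i = α ^ (i : ℕ) := by
  let pb := PowerBasis.ofAdjoinEqTop (IsIntegral.of_finite K α)
    (Algebra.adjoin_eq_top_of_primitive_element (IsAlgebraic.of_finite K α) hα)
  exact ⟨pb.basis.reindex (finCongr pb.finrank.symm), fun i => by
    rw [Basis.reindex_apply, PowerBasis.basis_eq_pow]; rfl⟩

theorem AlgEquiv.apply_injective_of_adjoin_simple_eq_top {K L : Type*} [Field K] [Field L]
    [Algebra K L] {α : L} (halg : IsAlgebraic K α) (hα : IntermediateField.adjoin K {α} = ⊤) :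
    Function.Injective fun σ : L ≃ₐ[K] L => σ α := by
  intro σ τ h
  refine AlgEquiv.coe_toAlgHom_injective
    (AlgHom.ext_of_adjoin_eq_top (Algebra.adjoin_eq_top_of_primitive_element halg hα) ?_)
  simpa using h

theorem AlgHom.exists_apply_eq_smul_of_pow_eq_algebraMap {K L : Type*} [Field K] [Field L]
    [Algebra K L] {n : ℕ} [NeZero n] {ζ : K} (hζ : IsPrimitiveRoot ζ n) {α : L} {a : K}
    (hα : α ^ n = algebraMap K L a) (σ : L →ₐ[K] L) : ∃ c : K, σ α = c • α := by
  rcases eq_or_ne α 0 with rfl | hα0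
  · exact ⟨1, by simp⟩
  have hpow : (σ α / α) ^ n = 1 := by
    rw [div_pow, ← map_pow, hα, AlgHom.commutes, ← hα, div_self (pow_ne_zero n hα0)]
  obtain ⟨k, -, hk⟩ := (hζ.map_of_injective (algebraMap K L).injective).eq_pow_of_pow_eq_one hpow
  exact ⟨ζ ^ k, by rw [Algebra.smul_def, map_pow, hk, div_mul_cancel₀ _ hα0]⟩

theorem kummer_normal_basis_general (L : Type*) [Field L]
    (F : Type*) [Field F] [Algebra L F] [FiniteDimensional L F] [IsGalois L F]
    [IsCyclic (F ≃ₐ[L] F)]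
    (n : ℕ) (hn : Module.finrank L F = n) (ζ : L) (hζ : IsPrimitiveRoot ζ n) :
    ∃ (ξ : L) (α : F), α ^ n = algebraMap L F ξ ∧
      IntermediateField.adjoin L {α} = ⊤ ∧
      IsNormalBasisGen L F (∑ s ∈ Finset.range n, α ^ s) := by
  subst hn
  have : NeZero (finrank L F) := ⟨finrank_pos.ne'⟩
  obtain ⟨α, ⟨ξ, hξ⟩, hα⟩ :=
    exists_root_adjoin_eq_top_of_isCyclic L F ⟨ζ, (mem_primitiveRoots finrank_pos).2 hζ⟩
  obtain ⟨b, hb⟩ := exists_basis_pow_of_adjoin_simple_eq_top hα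
  choose c hc using fun σ : F ≃ₐ[L] F =>
    AlgHom.exists_apply_eq_smul_of_pow_eq_algebraMap hζ hξ.symm σ.toAlgHom
  simp only [AlgEquiv.toAlgHom_apply] at hc
  have hc_inj : Function.Injective c := fun σ τ h =>
    AlgEquiv.apply_injective_of_adjoin_simple_eq_top (IsAlgebraic.of_finite L α) hα <| by
      simp only [hc, h]
  have hconj : (fun σ : F ≃ₐ[L] F => σ (∑ s ∈ Finset.range (finrank L F), α ^ s)) =
      fun σ => ∑ i : Fin (finrank L F), c σ ^ (i : ℕ) • b i := by
    ext σ
    rw [map_sum, ← Fin.sum_univ_eq_sum_range]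
    simp [hb, hc, smul_pow]
  refine ⟨ξ, α, hξ.symm, hα, ?_⟩
  rw [IsNormalBasisGen, hconj]
  exact b.linearIndependent_and_span_eq_top_sum_pow_smul hc_inj
    (by rw [Fintype.card_eq_nat_card, IsGalois.card_aut_eq_finrank])

/-- Let `L` be a number field containing a primitive `n`-th root of unity and `F/L` a cyclic
Galois extension of degree `n`. Then `F = L(α)` for some `α` with `αⁿ = ξ ∈ L`, and the
conjugates of `∑_{s=0}^{n-1} α^s` form a normal basis of `F` over `L`. -/
theorem kummer_normal_basis (L : Type*) [Field L] [NumberField L]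
    (F : Type*) [Field F] [Algebra L F] [FiniteDimensional L F] [IsGalois L F]
    [IsCyclic (F ≃ₐ[L] F)]
    (n : ℕ) (hn : Module.finrank L F = n) (ζ : L) (hζ : IsPrimitiveRoot ζ n) :
    ∃ (ξ : L) (α : F), α ^ n = algebraMap L F ξ ∧
      IntermediateField.adjoin L {α} = ⊤ ∧
      IsNormalBasisGen L F (∑ s ∈ Finset.range n, α ^ s) :=
  kummer_normal_basis_general L F n hn ζ hζ
end

section
/- Let L be a number field and let F₁ and F₂ be finite Galois extensions of L inside a fixed algebraic closure of L, with F₁ ∩ F₂ = L. If for s = 1, 2 the conjugates of ξ_s ∈ F_s over L form a normal basis of F_s over L, then the conjugates of ξ₁ξ₂ over L form a normal basis of the compositum F₁F₂ over L. -/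
theorem IsNormalBasisGen.of_linearIndependent {L F : Type*} [Field L] [Field F] [Algebra L F]
    [FiniteDimensional L F] [IsGalois L F] {x : F}
    (hx : LinearIndependent L fun σ : F ≃ₐ[L] F => σ x) : IsNormalBasisGen L F x :=
  ⟨hx, hx.span_eq_top_of_card_eq_finrank' <| by
    rw [← Nat.card_eq_fintype_card, IsGalois.card_aut_eq_finrank]⟩

namespace IntermediateField

variable {F E : Type*} [Field F] [Field E] [Algebra F E]

theorem algHom_ext_sup {M : Type*} [Semiring M] [Algebra F M] {K₁ K₂ : IntermediateField F E}
    {φ ψ : ↥(K₁ ⊔ K₂) →ₐ[F] M}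
    (h₁ : ∀ x : K₁, φ (inclusion le_sup_left x) = ψ (inclusion le_sup_left x))
    (h₂ : ∀ x : K₂, φ (inclusion le_sup_right x) = ψ (inclusion le_sup_right x)) : φ = ψ :=
  algHom_ext_of_eq_adjoin F (sup_def K₁ K₂) fun x hx =>
    hx.elim (fun hx => h₁ ⟨x, hx⟩) (fun hx => h₂ ⟨x, hx⟩)

noncomputable def restrictGal {K S : IntermediateField F E} [Normal F K] (h : K ≤ S)
    (σ : Gal(S/F)) : Gal(K/F) :=
  Normal.algHomEquivAut F E K ((S.val.comp σ.toAlgHom).comp (inclusion h))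

theorem coe_restrictGal_apply {K S : IntermediateField F E} [Normal F K] (h : K ≤ S)
    (σ : Gal(S/F)) (x : K) : (restrictGal h σ x : E) = σ (inclusion h x) :=
  AlgHom.restrictNormal_commutes _ K x

theorem restrictGal_prod_injective {K₁ K₂ : IntermediateField F E} [Normal F K₁] [Normal F K₂] :
    Function.Injective fun σ : Gal(↥(K₁ ⊔ K₂)/F) =>
      (restrictGal le_sup_left σ, restrictGal le_sup_right σ) := by
  intro σ τ hστ
  simp only [Prod.mk.injEq, AlgEquiv.ext_iff, Subtype.ext_iff, coe_restrictGal_apply] at hστ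
  have hval : (K₁ ⊔ K₂).val.comp σ.toAlgHom = (K₁ ⊔ K₂).val.comp τ.toAlgHom :=
    algHom_ext_sup hστ.1 hστ.2
  exact AlgEquiv.ext fun x => Subtype.ext (AlgHom.congr_fun hval x)

end IntermediateField

open IntermediateField

theorem normal_basis_of_compositum_general (L : Type*) [Field L]
    (Ω : Type*) [Field Ω] [Algebra L Ω]
    (F₁ F₂ : IntermediateField L Ω)
    [FiniteDimensional L F₁] [FiniteDimensional L F₂]
    [IsGalois L F₁] [IsGalois L F₂]
    (hmeet : F₁ ⊓ F₂ = ⊥)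
    (ξ₁ : F₁) (ξ₂ : F₂)
    (h₁ : IsNormalBasisGen L F₁ ξ₁) (h₂ : IsNormalBasisGen L F₂ ξ₂) :
    IsNormalBasisGen L ↥(F₁ ⊔ F₂)
      ⟨(ξ₁ : Ω) * (ξ₂ : Ω),
        mul_mem ((le_sup_left : F₁ ≤ F₁ ⊔ F₂) ξ₁.2) ((le_sup_right : F₂ ≤ F₁ ⊔ F₂) ξ₂.2)⟩ := by
  have : IsGalois L ↥(F₁ ⊔ F₂) := ⟨⟩
  have hprod := (LinearDisjoint.of_inf_eq_bot hmeet).linearIndependent_mul h₁.1 h₂.1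
  refine .of_linearIndependent <| .of_comp (F₁ ⊔ F₂).val.toLinearMap ?_
  convert hprod.comp _ restrictGal_prod_injective using 1
  funext σ
  show (σ (inclusion le_sup_left ξ₁ * inclusion le_sup_right ξ₂) : Ω) = _
  rw [map_mul, MulMemClass.coe_mul, ← coe_restrictGal_apply, ← coe_restrictGal_apply]
  rfl

/-- Let `L` be a number field and `F₁, F₂` finite Galois extensions of `L` inside a fixed
algebraic closure with `F₁ ∩ F₂ = L`. If the conjugates of `ξₛ ∈ Fₛ` form a normal basis of
`Fₛ` over `L` (`s = 1,2`), then the conjugates of `ξ₁ξ₂` form a normal basis of the compositum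
`F₁F₂` over `L`. -/
theorem normal_basis_of_compositum (L : Type*) [Field L] [NumberField L]
    (Ω : Type*) [Field Ω] [Algebra L Ω] [IsAlgClosure L Ω]
    (F₁ F₂ : IntermediateField L Ω)
    [FiniteDimensional L F₁] [FiniteDimensional L F₂]
    [IsGalois L F₁] [IsGalois L F₂]
    (hmeet : F₁ ⊓ F₂ = ⊥)
    (ξ₁ : F₁) (ξ₂ : F₂)
    (h₁ : IsNormalBasisGen L F₁ ξ₁) (h₂ : IsNormalBasisGen L F₂ ξ₂) :
    IsNormalBasisGen L ↥(F₁ ⊔ F₂)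
      ⟨(ξ₁ : Ω) * (ξ₂ : Ω),
        mul_mem ((le_sup_left : F₁ ≤ F₁ ⊔ F₂) ξ₁.2) ((le_sup_right : F₂ ≤ F₁ ⊔ F₂) ξ₂.2)⟩ :=
  normal_basis_of_compositum_general L Ω F₁ F₂ hmeet ξ₁ ξ₂ h₁ h₂
end

section
/- Let d_K be a negative integer with d_K ≡ 0 or 1 (mod 4) and d_K ≤ −7, and set θ = √(d_K)/2 if d_K ≡ 0 (mod 4) and θ = (−1+√(d_K))/2 if d_K ≡ 1 (mod 4), a point of the upper half-plane ℍ (here √(d_K) = i√(−d_K)). Then for every integer N ≥ 2, the complex number ∏_{1 ≤ w ≤ N/2, gcd(w,N)=1} g_{(0, w/N)}^{12N/gcd(6,N)}(θ) is real; indeed it equals ∏_{1 ≤ w ≤ N/2, gcd(w,N)=1} q_θ^{N/gcd(6,N)} · (2 sin(wπ/N))^{12N/gcd(6,N)} · ∏_{n=1}^∞ (1 − 2cos(2wπ/N)·q_θ^n + q_θ^{2n})^{12N/gcd(6,N)}, where q_θ = e^{2πiθ} is real. -/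
/-!
With `r₁ = 0` every factor of the product defining `g_{(0,r)}(τ)` pairs `e^{2πir}` with its
inverse, so `(1 - qⁿ e^{2πir})(1 - qⁿ e^{-2πir}) = 1 - 2cos(2πr) qⁿ + q^{2n}` with `q = e^{2πiτ}`,
and the prefactor is `q^{1/12} · 2i sin(πr)`. Raising to a power `12m` clears both the twelfth
root and `i`. At the CM point `θ` the nome `q_θ = ±e^{-π√|d_K|}` is real of modulus `< 1`, so the
remaining infinite product converges in `ℝ` and everything is real.
-/

open Complex
open scoped Real

lemma multipliable_one_sub_mul_pow_add_pow_two_mul {q : ℝ} (hq : |q| < 1) (c : ℝ) :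
    Multipliable fun n : ℕ => 1 - c * q ^ (n + 1) + q ^ (2 * (n + 1)) := by
  have hgeom (x : ℝ) (hx : |x| < 1) : Summable fun n : ℕ => x ^ (n + 1) :=
    (summable_nat_add_iff 1).mpr (summable_geometric_of_abs_lt_one hx)
  have hq2 : |q ^ 2| < 1 := by rw [abs_pow]; exact pow_lt_one₀ (abs_nonneg q) hq two_ne_zero
  have hsum : Summable fun n : ℕ => q ^ (2 * (n + 1)) - c * q ^ (n + 1) := by
    simp only [pow_mul]
    exact (hgeom _ hq2).sub ((hgeom q hq).mul_left c)
  exact (multipliable_one_add_of_summable hsum.norm).congr fun n => by ring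

lemma one_sub_mul_exp_mul_one_sub_mul_exp_neg (x α : ℂ) :
    (1 - x * exp (α * I)) * (1 - x * exp (-α * I)) = 1 - 2 * cos α * x + x ^ 2 := by
  have hinv : exp (α * I) * exp (-α * I) = 1 := by rw [← exp_add]; simp
  linear_combination x ^ 2 * hinv + x * two_cos (x := α)

lemma siegelG_zero_fst_s17 (r : ℚ) (τ : ℂ) :
    siegelG (0, r) τ = exp (2 * π * I * τ / 12) * (2 * I * sin (π * r)) *
      ∏' n : ℕ, (1 - 2 * cos (2 * π * r) * exp (2 * π * I * τ) ^ (n + 1) +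
        exp (2 * π * I * τ) ^ (2 * (n + 1))) := by
  have hfactor (n : ℕ) :
      (1 - exp (2 * π * I * ((n + 1) * τ + (((0 : ℚ) : ℂ) * τ + r)))) *
          (1 - exp (2 * π * I * ((n + 1) * τ - (((0 : ℚ) : ℂ) * τ + r)))) =
        1 - 2 * cos (2 * π * r) * exp (2 * π * I * τ) ^ (n + 1) +
          exp (2 * π * I * τ) ^ (2 * (n + 1)) := by
    rw [pow_mul', ← one_sub_mul_exp_mul_one_sub_mul_exp_neg, ← exp_nat_mul, ← exp_add, ← exp_add]
    congr 3 <;> push_cast <;> ring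
  have hprefactor : exp (π * I * r * (((0 : ℚ) : ℂ) - 1)) *
      (1 - exp (2 * π * I * (((0 : ℚ) : ℂ) * τ + r))) = -(2 * I * sin (π * r)) := by
    rw [mul_sub, mul_one, ← exp_add, show π * I * r * (((0 : ℚ) : ℂ) - 1) = -(π * r) * I by push_cast; ring,
      show _ + 2 * π * I * (((0 : ℚ) : ℂ) * τ + r) = π * r * I by push_cast; ring]
    linear_combination I * two_sin (x := π * r) + (exp (-(π * r) * I) - exp (π * r * I)) * I_sq
  rw [siegelG, tprod_congr hfactor, mul_assoc (-_), hprefactor]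
  push_cast
  ring_nf

theorem siegelG_zero_fst_pow_twelve_mul_eq_ofReal {τ : ℂ} {q : ℝ}
    (hq : (q : ℂ) = exp (2 * π * I * τ)) (hq1 : |q| < 1) (r : ℚ) (m : ℕ) :
    siegelG (0, r) τ ^ (12 * m) =
      ((q ^ m * (2 * Real.sin (π * r)) ^ (12 * m) *
        ∏' n : ℕ, (1 - 2 * Real.cos (2 * π * r) * q ^ (n + 1) + q ^ (2 * (n + 1))) ^ (12 * m) :
          ℝ) : ℂ) := by
  have hF := multipliable_one_sub_mul_pow_add_pow_two_mul hq1 (2 * Real.cos (2 * π * r))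
  have hnome : exp (2 * π * I * τ / 12) ^ (12 * m) = (q : ℂ) ^ m := by
    rw [← exp_nat_mul, hq, ← exp_nat_mul]
    congr 1
    push_cast
    ring
  have hI : I ^ (12 * m) = 1 := by rw [pow_mul, show I ^ 12 = (I ^ 4) ^ 3 by ring, I_pow_four]; simp
  have hprod : ∏' n : ℕ, (1 - 2 * cos (2 * π * r) * (q : ℂ) ^ (n + 1) + (q : ℂ) ^ (2 * (n + 1))) =
      ((∏' n : ℕ, (1 - 2 * Real.cos (2 * π * r) * q ^ (n + 1) + q ^ (2 * (n + 1))) : ℝ) : ℂ) := by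
    refine (tprod_congr fun n => ?_).trans (hF.map_tprod ofRealHom continuous_ofReal).symm
    push_cast [ofRealHom_eq_coe]
    rfl
  rw [siegelG_zero_fst_s17, ← hq, hprod, mul_pow, mul_pow, mul_pow, mul_pow, hnome, hI,
    hF.tprod_pow]
  push_cast
  ring

lemma exp_two_pi_I_mul_I_mul_div_two (s : ℝ) :
    exp (2 * π * I * (I * s / 2)) = Real.exp (-(π * s)) := by
  rw [ofReal_exp]
  congr 1
  push_cast
  linear_combination (π * s : ℂ) * I_mul_I

lemma exp_two_pi_I_mul_neg_one_add_I_mul_div_two (s : ℝ) :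
    exp (2 * π * I * ((-1 + I * s) / 2)) = -Real.exp (-(π * s)) := by
  rw [show 2 * π * I * ((-1 + I * s) / 2) = 2 * π * I * (I * s / 2) - π * I by ring, exp_sub,
    exp_pi_mul_I, exp_two_pi_I_mul_I_mul_div_two]
  ring

theorem prod_siegelG_real_general (d : ℤ) (hd : d ≤ -7)
    (θ : ℂ)
    (hθ : θ = if d % 4 = 0 then Complex.I * (Real.sqrt (-(d : ℝ)) : ℂ) / 2
      else (-1 + Complex.I * (Real.sqrt (-(d : ℝ)) : ℂ)) / 2)
    (N : ℕ) :
    ∃ qθ : ℝ, (qθ : ℂ) = Complex.exp (2 * Real.pi * Complex.I * θ) ∧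
      ∏ w ∈ Finset.filter (fun w => Nat.gcd w N = 1) (Finset.Icc 1 (N / 2)),
          siegelG (0, (w : ℚ) / (N : ℚ)) θ ^ (12 * N / Nat.gcd 6 N) =
        ((∏ w ∈ Finset.filter (fun w => Nat.gcd w N = 1) (Finset.Icc 1 (N / 2)),
            qθ ^ (N / Nat.gcd 6 N) *
              (2 * Real.sin ((w : ℝ) * Real.pi / (N : ℝ))) ^ (12 * N / Nat.gcd 6 N) *
              ∏' n : ℕ,
                (1 - 2 * Real.cos (2 * (w : ℝ) * Real.pi / (N : ℝ)) * qθ ^ (n + 1) +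
                    qθ ^ (2 * (n + 1))) ^ (12 * N / Nat.gcd 6 N) : ℝ) : ℂ) := by
  obtain ⟨q, hq, hq1⟩ : ∃ q : ℝ, (q : ℂ) = exp (2 * π * I * θ) ∧ |q| < 1 := by
    have hd' : (0 : ℝ) < -(d : ℝ) := neg_pos.mpr (by exact_mod_cast hd.trans_lt (by norm_num))
    have hexp : |Real.exp (-(π * √(-(d : ℝ))))| < 1 := by
      rw [abs_of_pos (Real.exp_pos _), Real.exp_lt_one_iff, neg_lt_zero]
      exact mul_pos Real.pi_pos (Real.sqrt_pos.mpr hd')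
    subst hθ
    split_ifs
    · exact ⟨_, (exp_two_pi_I_mul_I_mul_div_two _).symm, hexp⟩
    · refine ⟨_, ?_, (abs_neg _).trans_lt hexp⟩
      rw [exp_two_pi_I_mul_neg_one_add_I_mul_div_two, ofReal_neg]
  refine ⟨q, hq, ?_⟩
  rw [ofReal_prod]
  refine Finset.prod_congr rfl fun w _ => ?_
  rw [Nat.mul_div_assoc 12 (Nat.gcd_dvd_right 6 N),
    siegelG_zero_fst_pow_twelve_mul_eq_ofReal hq hq1]
  push_cast
  ring_nf

/-- Let `d_K ≤ -7` be a negative integer congruent to `0` or `1` mod `4`, and `θ` the associated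
CM point. For every `N ≥ 2`, the value `∏_{1 ≤ w ≤ N/2, gcd(w,N)=1} g_{(0,w/N)}^{12N/gcd(6,N)}(θ)`
is real; indeed `q_θ = e^{2πiθ}` is a real number and the value equals
`∏_w q_θ^{N/gcd(6,N)} (2 sin(wπ/N))^{12N/gcd(6,N)} ∏_{n≥1} (1 - 2cos(2wπ/N) q_θ^n + q_θ^{2n})^{12N/gcd(6,N)}`. -/
theorem prod_siegelG_real (d : ℤ) (hd : d ≤ -7) (hd4 : d % 4 = 0 ∨ d % 4 = 1)
    (θ : ℂ)
    (hθ : θ = if d % 4 = 0 then Complex.I * (Real.sqrt (-(d : ℝ)) : ℂ) / 2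
      else (-1 + Complex.I * (Real.sqrt (-(d : ℝ)) : ℂ)) / 2)
    (N : ℕ) (hN : 2 ≤ N) :
    ∃ qθ : ℝ, (qθ : ℂ) = Complex.exp (2 * Real.pi * Complex.I * θ) ∧
      ∏ w ∈ Finset.filter (fun w => Nat.gcd w N = 1) (Finset.Icc 1 (N / 2)),
          siegelG (0, (w : ℚ) / (N : ℚ)) θ ^ (12 * N / Nat.gcd 6 N) =
        ((∏ w ∈ Finset.filter (fun w => Nat.gcd w N = 1) (Finset.Icc 1 (N / 2)),
            qθ ^ (N / Nat.gcd 6 N) *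
              (2 * Real.sin ((w : ℝ) * Real.pi / (N : ℝ))) ^ (12 * N / Nat.gcd 6 N) *
              ∏' n : ℕ,
                (1 - 2 * Real.cos (2 * (w : ℝ) * Real.pi / (N : ℝ)) * qθ ^ (n + 1) +
                    qθ ^ (2 * (n + 1))) ^ (12 * N / Nat.gcd 6 N) : ℝ) : ℂ) :=
  prod_siegelG_real_general d hd θ hθ N
end

section
/- Let p ≥ 5 be a prime, m ≥ 1 an integer with gcd(m,p) = 1, B, C ∈ ℤ, and let n and ℓ be positive integers with n ≥ 2ℓ. Then the congruence p^ℓ m² x² + (2m − B p^ℓ m²) x + C p^ℓ m² − B m ≡ 0 (mod p^{2(n−ℓ)−ℓ}) has an integer solution x. -/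
/-- Hensel-style lifting for a quadratic whose leading coefficient is divisible by `p`
and whose linear coefficient is coprime to `p`. -/
lemma aux_quad_lift (p a b c : ℤ) (ha : p ∣ a) (hb : IsCoprime p b) :
    ∀ k : ℕ, ∃ x : ℤ, p ^ k ∣ a * x ^ 2 + b * x + c := by
  intro k
  induction k with
  | zero => exact ⟨0, by simp⟩
  | succ k ih =>
    obtain ⟨x, hx⟩ := ih
    obtain ⟨t, ht⟩ := hx
    obtain ⟨a', rfl⟩ := ha
    obtain ⟨u, v, huv⟩ := hb
    refine ⟨x - p ^ k * (v * t), t * u - 2 * v * t * a' * x + p ^ k * a' * v ^ 2 * t ^ 2, ?_⟩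
    have hpk : (p : ℤ) ^ (k + 1) = p ^ k * p := by ring
    linear_combination ht - p ^ k * t * huv

/-- For a prime `p ≥ 5`, `m ≥ 1` coprime to `p`, `B, C ∈ ℤ`, and positive integers `n ≥ 2ℓ`,
the congruence `p^ℓ m² x² + (2m - B p^ℓ m²) x + C p^ℓ m² - B m ≡ 0 (mod p^{2(n-ℓ)-ℓ})` has an
integer solution. -/
theorem quadratic_congruence_solvable (p : ℕ) (hp : p.Prime) (hp5 : 5 ≤ p)
    (m : ℕ) (hm : 1 ≤ m) (hpm : Nat.Coprime m p) (B C : ℤ)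
    (n ℓ : ℕ) (hℓ : 1 ≤ ℓ) (hn : 2 * ℓ ≤ n) :
    ∃ x : ℤ,
      (p : ℤ) ^ ℓ * (m : ℤ) ^ 2 * x ^ 2 + (2 * (m : ℤ) - B * (p : ℤ) ^ ℓ * (m : ℤ) ^ 2) * x +
          C * (p : ℤ) ^ ℓ * (m : ℤ) ^ 2 - B * (m : ℤ) ≡ 0
        [ZMOD ((p : ℤ) ^ (2 * (n - ℓ) - ℓ))] := by
  set k := 2 * (n - ℓ) - ℓ with hk
  -- coefficients of the reduced quadratic (after factoring out m)
  set a : ℤ := (p : ℤ) ^ ℓ * (m : ℤ)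
  set b : ℤ := 2 - B * (p : ℤ) ^ ℓ * (m : ℤ)
  set c : ℤ := C * (p : ℤ) ^ ℓ * (m : ℤ) - B
  have hpa : (p : ℤ) ∣ a := by
    refine Dvd.dvd.mul_right ?_ _
    exact dvd_pow_self _ (by omega)
  have hp2 : IsCoprime (p : ℤ) (2 : ℤ) := by
    have h2 : Nat.Coprime p 2 := Nat.coprime_two_right.mpr (hp.odd_of_ne_two (by omega))
    exact_mod_cast Nat.isCoprime_iff_coprime.mpr h2
  have hpb : IsCoprime (p : ℤ) b := by
    have : b = 2 + (p : ℤ) * (-(B * (p : ℤ) ^ (ℓ - 1) * (m : ℤ))) := by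
      have hℓ' : (p : ℤ) ^ ℓ = p * p ^ (ℓ - 1) := by
        rw [← pow_succ']
        congr 1
        omega
      simp only [b, hℓ']
      ring
    rw [this]
    exact (IsCoprime.add_mul_left_right hp2 _)
  obtain ⟨x, hx⟩ := aux_quad_lift (p : ℤ) a b c hpa hpb k
  refine ⟨x, ?_⟩
  have : ((p : ℤ) ^ k) ∣
      (p : ℤ) ^ ℓ * (m : ℤ) ^ 2 * x ^ 2 + (2 * (m : ℤ) - B * (p : ℤ) ^ ℓ * (m : ℤ) ^ 2) * x +
        C * (p : ℤ) ^ ℓ * (m : ℤ) ^ 2 - B * (m : ℤ) := by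
    have heq : (p : ℤ) ^ ℓ * (m : ℤ) ^ 2 * x ^ 2 + (2 * (m : ℤ) - B * (p : ℤ) ^ ℓ * (m : ℤ) ^ 2) * x +
        C * (p : ℤ) ^ ℓ * (m : ℤ) ^ 2 - B * (m : ℤ) = (m : ℤ) * (a * x ^ 2 + b * x + c) := by
      simp only [a, b, c]; ring
    rw [heq]
    exact Dvd.dvd.mul_left hx _
  exact (Int.modEq_zero_iff_dvd).mpr this
end
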